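/- Let u = (u₁,u₂,u₃) : ℝ³ → ℝ³ be a smooth displacement field. Then u satisfies the monoclinic universality constraints — ∂²u₁/∂x₁² = ∂²u₁/∂x₁∂x₂ = ∂²u₁/∂x₁∂x₃ = ∂²u₁/∂x₂² = ∂²u₁/∂x₃² = 0; ∂²u₂/∂x₂² = ∂²u₂/∂x₁∂x₂ = ∂²u₂/∂x₂∂x₃ = ∂²u₂/∂x₁² = ∂²u₂/∂x₃² = 0; ∂²u₃/∂x₃² = ∂²u₃/∂x₁∂x₃ = ∂²u₃/∂x₂∂x₃ = ∂²u₃/∂x₁² = ∂²u₃/∂x₂² = ∂²u₃/∂x₁∂x₂ = 0; and ∂²u₁/∂x₂∂x₃ + ∂²u₂/∂x₁∂x₃ = 0, all identically on ℝ³ — if and only if there exist a constant real 3×3 matrix A, a vector b ∈ ℝ³, and a constant c ∈ ℝ such that u(x) = A x + b + c·(x₂x₃, −x₁x₃, 0) for all x ∈ ℝ³. (This is the characterization of universal displacements of the monoclinic class, which the paper shows is unchanged for the strain-gradient monoclinic classes ℤ₂, ℤ₂ ⊕ ℤ₂ᶜ and ℤ₂⁻.) -/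

import Mathlib

/-- Partial derivative of a scalar field on `ℝ³` in the `j`-th coordinate direction. -/
noncomputable def pd (j : Fin 3) (f : (Fin 3 → ℝ) → ℝ) : (Fin 3 → ℝ) → ℝ :=
  fun x => fderiv ℝ f x (Pi.single j 1)

/-- The `i`-th component of a vector field on `ℝ³`. -/
def comp (u : (Fin 3 → ℝ) → Fin 3 → ℝ) (i : Fin 3) : (Fin 3 → ℝ) → ℝ :=
  fun x => u x i

/-- Second partial derivative `∂²uᵢ/∂xⱼ∂xₖ` of the `i`-th component of `u`. -/
noncomputable def pdd (j k : Fin 3) (u : (Fin 3 → ℝ) → Fin 3 → ℝ) (i : Fin 3) :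
    (Fin 3 → ℝ) → ℝ :=
  pd j (pd k (comp u i))

section MonoclinicHelpers

lemma pd_smooth {f : (Fin 3 → ℝ) → ℝ} (hf : ContDiff ℝ (⊤:ℕ∞) f) (j : Fin 3) :
    ContDiff ℝ (⊤:ℕ∞) (pd j f) :=
  (hf.fderiv_right (m := (⊤:ℕ∞)) (by exact_mod_cast le_rfl)).clm_apply contDiff_const

lemma pd_diff {f : (Fin 3 → ℝ) → ℝ} (hf : ContDiff ℝ (⊤:ℕ∞) f) :
    Differentiable ℝ f := hf.differentiable (by simp)

lemma pd_apply {f : (Fin 3 → ℝ) → ℝ} {L : (Fin 3 → ℝ) →L[ℝ] ℝ} {x : Fin 3 → ℝ}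
    (h : HasFDerivAt f L x) (j : Fin 3) : pd j f x = L (Pi.single j 1) := by
  rw [pd, h.fderiv]

lemma pd_comm {f : (Fin 3 → ℝ) → ℝ} (hf : ContDiff ℝ (⊤:ℕ∞) f) (j k : Fin 3)
    (x : Fin 3 → ℝ) : pd j (pd k f) x = pd k (pd j f) x := by
  have hd : ∀ y, HasFDerivAt f (fderiv ℝ f y) y := fun y => (pd_diff hf y).hasFDerivAt
  have hf' : ContDiff ℝ (⊤:ℕ∞) (fderiv ℝ f) :=
    hf.fderiv_right (m := (⊤:ℕ∞)) (by exact_mod_cast le_rfl)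
  have hd2 : HasFDerivAt (fderiv ℝ f) (fderiv ℝ (fderiv ℝ f) x) x :=
    (hf'.differentiable (by simp) x).hasFDerivAt
  have hsym := second_derivative_symmetric hd hd2
  have key : ∀ a b : Fin 3,
      pd a (pd b f) x = fderiv ℝ (fderiv ℝ f) x (Pi.single a 1) (Pi.single b 1) := by
    intro a b
    have h2 := hd2.clm_apply (hasFDerivAt_const (Pi.single b (1:ℝ)) x)
    have := pd_apply h2 a
    show pd a (fun y => (fderiv ℝ f y) (Pi.single b 1)) x = _
    rw [this]; simp
  rw [key, key, hsym]

lemma const_of_pd_zero {f : (Fin 3 → ℝ) → ℝ} (hf : ContDiff ℝ (⊤:ℕ∞) f)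
    (h : ∀ j x, pd j f x = 0) (x : Fin 3 → ℝ) : f x = f 0 := by
  apply is_const_of_fderiv_eq_zero (pd_diff hf)
  intro y
  ext v
  have hv : v = v 0 • (Pi.single 0 1 : Fin 3 → ℝ) + v 1 • (Pi.single 1 1 : Fin 3 → ℝ)
      + v 2 • (Pi.single 2 1 : Fin 3 → ℝ) := by
    funext i
    fin_cases i <;> simp [Pi.single_apply]
  rw [hv]
  simp only [map_add, map_smul]
  have h0 := h 0 y; have h1 := h 1 y; have h2 := h 2 y
  simp only [pd] at h0 h1 h2
  simp [h0, h1, h2]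

lemma hasFDerivAt_coord (m : Fin 3) (x : Fin 3 → ℝ) :
    HasFDerivAt (fun y : Fin 3 → ℝ => y m)
      (ContinuousLinearMap.proj (R := ℝ) (φ := fun _ : Fin 3 => ℝ) m) x :=
  (ContinuousLinearMap.proj (R := ℝ) (φ := fun _ : Fin 3 => ℝ) m).hasFDerivAt

lemma pd_const (a : ℝ) (j : Fin 3) (x : Fin 3 → ℝ) : pd j (fun _ => a) x = 0 := by
  rw [pd_apply (hasFDerivAt_const a x) j]; rfl

lemma pd_lin1 (a C : ℝ) (m j : Fin 3) (x : Fin 3 → ℝ) :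
    pd j (fun y => a + C * y m) x = C * (Pi.single j 1 : Fin 3 → ℝ) m := by
  rw [pd_apply (f := fun y => a + C * y m) ((hasFDerivAt_const a x).add ((hasFDerivAt_coord m x).const_mul C)) j]
  simp

lemma pd_linc (C A B : ℝ) (m n j : Fin 3) (x : Fin 3 → ℝ) :
    pd j (fun y => C * (y m * A + y n * B)) x
      = C * ((Pi.single j 1 : Fin 3 → ℝ) m * A + (Pi.single j 1 : Fin 3 → ℝ) n * B) := by
  rw [pd_apply (f := fun y => C * (y m * A + y n * B)) ((((hasFDerivAt_coord m x).mul_const A).add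
    ((hasFDerivAt_coord n x).mul_const B)).const_mul C) j]
  simp; ring

lemma diff_linc (C A B : ℝ) (m n : Fin 3) :
    Differentiable ℝ (fun y : Fin 3 → ℝ => C * (y m * A + y n * B)) := fun x =>
  ((((hasFDerivAt_coord m x).mul_const A).add
    ((hasFDerivAt_coord n x).mul_const B)).const_mul C).differentiableAt

lemma pd_quad (C : ℝ) (m n j : Fin 3) (x : Fin 3 → ℝ) :
    pd j (fun y => C * (y m * y n)) x
      = C * (x m * (Pi.single j 1 : Fin 3 → ℝ) n + x n * (Pi.single j 1 : Fin 3 → ℝ) m) := by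
  rw [pd_apply (f := fun y => C * (y m * y n)) (((hasFDerivAt_coord m x).mul (hasFDerivAt_coord n x)).const_mul C) j]
  simp; ring

lemma pd_affq (a0 a1 a2 d C : ℝ) (m n j : Fin 3) (x : Fin 3 → ℝ) :
    pd j (fun y => a0 * y 0 + a1 * y 1 + a2 * y 2 + d + C * (y m * y n)) x
      = a0 * (Pi.single j 1 : Fin 3 → ℝ) 0 + a1 * (Pi.single j 1 : Fin 3 → ℝ) 1
        + a2 * (Pi.single j 1 : Fin 3 → ℝ) 2
        + C * (x m * (Pi.single j 1 : Fin 3 → ℝ) n + x n * (Pi.single j 1 : Fin 3 → ℝ) m) := by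
  have h : HasFDerivAt (fun y : Fin 3 → ℝ => a0 * y 0 + a1 * y 1 + a2 * y 2 + d
      + C * (y m * y n)) _ x :=
    ((((((hasFDerivAt_coord 0 x).const_mul a0).add
      ((hasFDerivAt_coord 1 x).const_mul a1)).add
      ((hasFDerivAt_coord 2 x).const_mul a2)).add_const d).add
      (((hasFDerivAt_coord m x).mul (hasFDerivAt_coord n x)).const_mul C))
  rw [pd_apply h j]; simp; ring

lemma smooth_quad (C : ℝ) (m n : Fin 3) :
    ContDiff ℝ (⊤:ℕ∞) (fun y : Fin 3 → ℝ => C * (y m * y n)) := by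
  exact contDiff_const.mul
    (((ContinuousLinearMap.proj (R := ℝ) (φ := fun _ : Fin 3 => ℝ) m).contDiff).mul
      ((ContinuousLinearMap.proj (R := ℝ) (φ := fun _ : Fin 3 => ℝ) n).contDiff))

lemma smooth_lin : ∀ m : Fin 3, ContDiff ℝ (⊤:ℕ∞) (fun y : Fin 3 → ℝ => y m) := fun m =>
  (ContinuousLinearMap.proj (R := ℝ) (φ := fun _ : Fin 3 => ℝ) m).contDiff

lemma pd_sub' {f g : (Fin 3 → ℝ) → ℝ} {x : Fin 3 → ℝ} (hf : DifferentiableAt ℝ f x)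
    (hg : DifferentiableAt ℝ g x) (j : Fin 3) :
    pd j (fun y => f y - g y) x = pd j f x - pd j g x := by
  simp only [pd, fderiv_fun_sub hf hg, ContinuousLinearMap.sub_apply]

lemma diff_quad (C : ℝ) (m n : Fin 3) :
    Differentiable ℝ (fun y : Fin 3 → ℝ => C * (y m * y n)) :=
  fun x => (((hasFDerivAt_coord m x).mul (hasFDerivAt_coord n x)).const_mul C).differentiableAt

/-- Subtracting a quadratic monomial: the first-derivative formula. -/
lemma pd_sub_quad {f : (Fin 3 → ℝ) → ℝ} (hf : ContDiff ℝ (⊤:ℕ∞) f) (C : ℝ) (m n k : Fin 3)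
    (x : Fin 3 → ℝ) :
    pd k (fun y => f y - C * (y m * y n)) x
      = pd k f x - C * (x m * (Pi.single k 1 : Fin 3 → ℝ) n
          + x n * (Pi.single k 1 : Fin 3 → ℝ) m) := by
  rw [pd_sub' (pd_diff hf x) ((diff_quad C m n) x), pd_quad]

/-- A smooth function whose second partials all vanish is affine. -/
lemma affine_rec {f : (Fin 3 → ℝ) → ℝ} (hf : ContDiff ℝ (⊤:ℕ∞) f)
    (h : ∀ j k x, pd j (pd k f) x = 0) (x : Fin 3 → ℝ) :
    f x = pd 0 f 0 * x 0 + pd 1 f 0 * x 1 + pd 2 f 0 * x 2 + f 0 := by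
  have hpc : ∀ k y, pd k f y = pd k f 0 := fun k y =>
    const_of_pd_zero (pd_smooth hf k) (fun j z => h j k z) y
  set g := fun y : Fin 3 → ℝ => f y
    - (pd 0 f 0 * (y 0 * 1) + (pd 1 f 0 * (y 1 * 1) + pd 2 f 0 * (y 2 * 1))) with hg
  have hgs : ContDiff ℝ (⊤:ℕ∞) g := by
    apply hf.sub
    exact (contDiff_const.mul ((smooth_lin 0).mul contDiff_const)).add
      ((contDiff_const.mul ((smooth_lin 1).mul contDiff_const)).add
        (contDiff_const.mul ((smooth_lin 2).mul contDiff_const)))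
  have hlin : ∀ j y, pd j (fun y : Fin 3 → ℝ =>
      pd 0 f 0 * (y 0 * 1) + (pd 1 f 0 * (y 1 * 1) + pd 2 f 0 * (y 2 * 1))) y
      = pd 0 f 0 * (Pi.single j 1 : Fin 3 → ℝ) 0 + pd 1 f 0 * (Pi.single j 1 : Fin 3 → ℝ) 1
        + pd 2 f 0 * (Pi.single j 1 : Fin 3 → ℝ) 2 := by
    intro j y
    have hfd : HasFDerivAt (fun y : Fin 3 → ℝ =>
        pd 0 f 0 * (y 0 * 1) + (pd 1 f 0 * (y 1 * 1) + pd 2 f 0 * (y 2 * 1))) _ y :=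
      ((((hasFDerivAt_coord 0 y).mul_const 1).const_mul (pd 0 f 0)).add
        ((((hasFDerivAt_coord 1 y).mul_const 1).const_mul (pd 1 f 0)).add
          (((hasFDerivAt_coord 2 y).mul_const 1).const_mul (pd 2 f 0))))
    rw [pd_apply hfd j]; simp; ring
  have hdl : Differentiable ℝ (fun y : Fin 3 → ℝ =>
      pd 0 f 0 * (y 0 * 1) + (pd 1 f 0 * (y 1 * 1) + pd 2 f 0 * (y 2 * 1))) := fun y =>
    ((((hasFDerivAt_coord 0 y).mul_const 1).const_mul (pd 0 f 0)).add
      ((((hasFDerivAt_coord 1 y).mul_const 1).const_mul (pd 1 f 0)).add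
        (((hasFDerivAt_coord 2 y).mul_const 1).const_mul (pd 2 f 0)))).differentiableAt
  have hgz : ∀ j y, pd j g y = 0 := by
    intro j y
    rw [hg, pd_sub' (pd_diff hf y) (hdl y) j, hlin, hpc j y]
    fin_cases j <;> simp
  have hc := const_of_pd_zero hgs hgz x
  rw [hg] at hc
  simp only [Pi.zero_apply, mul_zero, zero_mul, mul_one, sub_zero, add_zero, mul_zero] at hc
  have : f x - (pd 0 f 0 * x 0 + (pd 1 f 0 * x 1 + pd 2 f 0 * x 2)) = f 0 := by
    simpa using hc
  linarith

/-- The mixed partial `∂₁∂₂ f` is constant under the universality constraints. -/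
lemma mixed_const {f : (Fin 3 → ℝ) → ℝ} (hf : ContDiff ℝ (⊤:ℕ∞) f)
    (h02 : ∀ x, pd 0 (pd 2 f) x = 0) (h11 : ∀ x, pd 1 (pd 1 f) x = 0)
    (h22 : ∀ x, pd 2 (pd 2 f) x = 0) (x : Fin 3 → ℝ) :
    pd 1 (pd 2 f) x = pd 1 (pd 2 f) 0 := by
  apply const_of_pd_zero (pd_smooth (pd_smooth hf 2) 1)
  intro j y
  have e02 : pd 0 (pd 2 f) = fun _ => (0:ℝ) := funext h02
  have e11 : pd 1 (pd 1 f) = fun _ => (0:ℝ) := funext h11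
  have e22 : pd 2 (pd 2 f) = fun _ => (0:ℝ) := funext h22
  fin_cases j
  · show pd (0:Fin 3) (pd 1 (pd 2 f)) y = 0
    rw [show pd (0:Fin 3) (pd 1 (pd 2 f)) y = pd 1 (pd 0 (pd 2 f)) y from
      pd_comm (pd_smooth hf 2) 0 1 y, e02, pd_const]
  · show pd (1:Fin 3) (pd 1 (pd 2 f)) y = 0
    have e12 : pd 1 (pd 2 f) = pd 2 (pd 1 f) := funext fun z => pd_comm hf 1 2 z
    rw [e12, show pd (1:Fin 3) (pd 2 (pd 1 f)) y = pd 2 (pd 1 (pd 1 f)) y from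
      pd_comm (pd_smooth hf 1) 1 2 y, e11, pd_const]
  · show pd (2:Fin 3) (pd 1 (pd 2 f)) y = 0
    rw [show pd (2:Fin 3) (pd 1 (pd 2 f)) y = pd 1 (pd 2 (pd 2 f)) y from
      pd_comm (pd_smooth hf 2) 2 1 y, e22, pd_const]

end MonoclinicHelpers
/-- A smooth displacement field `u : ℝ³ → ℝ³` satisfies the monoclinic universality
constraints if and only if it is the superposition of a homogeneous displacement field
and the one-parameter inhomogeneous field `c • (x₂x₃, −x₁x₃, 0)`. -/
theorem monoclinic_universal_displacements
    (u : (Fin 3 → ℝ) → Fin 3 → ℝ) (hu : ContDiff ℝ (⊤ : ℕ∞) u) :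
    ((∀ x, pdd 0 0 u 0 x = 0) ∧ (∀ x, pdd 0 1 u 0 x = 0) ∧ (∀ x, pdd 0 2 u 0 x = 0) ∧
     (∀ x, pdd 1 1 u 0 x = 0) ∧ (∀ x, pdd 2 2 u 0 x = 0) ∧
     (∀ x, pdd 1 1 u 1 x = 0) ∧ (∀ x, pdd 0 1 u 1 x = 0) ∧ (∀ x, pdd 1 2 u 1 x = 0) ∧
     (∀ x, pdd 0 0 u 1 x = 0) ∧ (∀ x, pdd 2 2 u 1 x = 0) ∧
     (∀ x, pdd 2 2 u 2 x = 0) ∧ (∀ x, pdd 0 2 u 2 x = 0) ∧ (∀ x, pdd 1 2 u 2 x = 0) ∧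
     (∀ x, pdd 0 0 u 2 x = 0) ∧ (∀ x, pdd 1 1 u 2 x = 0) ∧ (∀ x, pdd 0 1 u 2 x = 0) ∧
     (∀ x, pdd 1 2 u 0 x + pdd 0 2 u 1 x = 0)) ↔
    ∃ (A : Matrix (Fin 3) (Fin 3) ℝ) (b : Fin 3 → ℝ) (c : ℝ),
      ∀ x, u x = A.mulVec x + b + ![c * (x 1 * x 2), -(c * (x 0 * x 2)), 0] := by
  have s0 : ContDiff ℝ (⊤:ℕ∞) (comp u 0) := contDiff_pi.1 hu 0
  have s1 : ContDiff ℝ (⊤:ℕ∞) (comp u 1) := contDiff_pi.1 hu 1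
  have s2 : ContDiff ℝ (⊤:ℕ∞) (comp u 2) := contDiff_pi.1 hu 2
  constructor
  · rintro ⟨h1, h2, h3, h4, h5, h6, h7, h8, h9, h10, h11, h12, h13, h14, h15, h16, h17⟩
    simp only [pdd] at h1 h2 h3 h4 h5 h6 h7 h8 h9 h10 h11 h12 h13 h14 h15 h16 h17
    set C := pd 1 (pd 2 (comp u 0)) 0 with hCdef
    have hC : ∀ x, pd 1 (pd 2 (comp u 0)) x = C := fun x => mixed_const s0 h3 h4 h5 x
    have hC' : ∀ x, pd 2 (pd 1 (comp u 0)) x = C := fun x => (pd_comm s0 2 1 x).trans (hC x)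
    have hD : ∀ x, pd 0 (pd 2 (comp u 1)) x = -C := by
      intro x; have a := h17 x; have b := hC x; linarith
    have hD' : ∀ x, pd 2 (pd 0 (comp u 1)) x = -C := fun x => (pd_comm s1 2 0 x).trans (hD x)
    -- the corrected fields
    have ew0 : ∀ k : Fin 3, pd k (fun y => comp u 0 y - C * (y 1 * y 2))
        = fun y => pd k (comp u 0) y - C * (y 1 * (Pi.single k 1 : Fin 3 → ℝ) 2
            + y 2 * (Pi.single k 1 : Fin 3 → ℝ) 1) :=
      fun k => funext fun y => pd_sub_quad s0 C 1 2 k y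
    have hw0 : ∀ j k x, pd j (pd k (fun y => comp u 0 y - C * (y 1 * y 2))) x = 0 := by
      intro j k x
      rw [ew0 k, pd_sub' (pd_diff (pd_smooth s0 k) x) (diff_linc C _ _ 1 2 x) j, pd_linc]
      have c10 : pd 1 (pd 0 (comp u 0)) x = 0 := (pd_comm s0 1 0 x).trans (h2 x)
      have c20 : pd 2 (pd 0 (comp u 0)) x = 0 := (pd_comm s0 2 0 x).trans (h3 x)
      fin_cases j <;> fin_cases k <;>
        simp [h1 x, h2 x, h3 x, h4 x, h5 x, hC x, hC' x, c10, c20]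
    have ew1 : ∀ k : Fin 3, pd k (fun y => comp u 1 y - (-C) * (y 0 * y 2))
        = fun y => pd k (comp u 1) y - (-C) * (y 0 * (Pi.single k 1 : Fin 3 → ℝ) 2
            + y 2 * (Pi.single k 1 : Fin 3 → ℝ) 0) :=
      fun k => funext fun y => pd_sub_quad s1 (-C) 0 2 k y
    have hw1 : ∀ j k x, pd j (pd k (fun y => comp u 1 y - (-C) * (y 0 * y 2))) x = 0 := by
      intro j k x
      rw [ew1 k, pd_sub' (pd_diff (pd_smooth s1 k) x) (diff_linc (-C) _ _ 0 2 x) j, pd_linc]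
      have c01 : pd 1 (pd 0 (comp u 1)) x = 0 := (pd_comm s1 1 0 x).trans (h7 x)
      have c21 : pd 2 (pd 1 (comp u 1)) x = 0 := (pd_comm s1 2 1 x).trans (h8 x)
      fin_cases j <;> fin_cases k <;>
        simp [h6 x, h7 x, h8 x, h9 x, h10 x, hD x, hD' x, c01, c21]
    have hw2 : ∀ j k x, pd j (pd k (comp u 2)) x = 0 := by
      intro j k x
      have c10 : pd 1 (pd 0 (comp u 2)) x = 0 := (pd_comm s2 1 0 x).trans (h16 x)
      have c20 : pd 2 (pd 0 (comp u 2)) x = 0 := (pd_comm s2 2 0 x).trans (h12 x)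
      have c21 : pd 2 (pd 1 (comp u 2)) x = 0 := (pd_comm s2 2 1 x).trans (h13 x)
      fin_cases j <;> fin_cases k <;>
        simp [h11 x, h12 x, h13 x, h14 x, h15 x, h16 x, c10, c20, c21]
    have sw0 : ContDiff ℝ (⊤:ℕ∞) (fun y => comp u 0 y - C * (y 1 * y 2)) :=
      s0.sub (smooth_quad C 1 2)
    have sw1 : ContDiff ℝ (⊤:ℕ∞) (fun y => comp u 1 y - (-C) * (y 0 * y 2)) :=
      s1.sub (smooth_quad (-C) 0 2)
    have rec0 := affine_rec sw0 hw0
    have rec1 := affine_rec sw1 hw1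
    have rec2 := affine_rec s2 hw2
    refine ⟨Matrix.of
        ![![pd 0 (fun y => comp u 0 y - C * (y 1 * y 2)) 0,
            pd 1 (fun y => comp u 0 y - C * (y 1 * y 2)) 0,
            pd 2 (fun y => comp u 0 y - C * (y 1 * y 2)) 0],
          ![pd 0 (fun y => comp u 1 y - (-C) * (y 0 * y 2)) 0,
            pd 1 (fun y => comp u 1 y - (-C) * (y 0 * y 2)) 0,
            pd 2 (fun y => comp u 1 y - (-C) * (y 0 * y 2)) 0],
          ![pd 0 (comp u 2) 0, pd 1 (comp u 2) 0, pd 2 (comp u 2) 0]],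
        ![comp u 0 0, comp u 1 0, comp u 2 0], C, ?_⟩
    intro x
    have R0 := rec0 x
    have R1 := rec1 x
    have R2 := rec2 x
    simp only [Pi.zero_apply, mul_zero, zero_mul, sub_zero] at R0 R1
    simp only [neg_mul, sub_neg_eq_add] at R1
    funext i
    fin_cases i
    · show u x 0 = _
      simp [Matrix.mulVec, dotProduct, Fin.sum_univ_three, Matrix.vecHead, Matrix.vecTail]
      have e : comp u 0 x = u x 0 := rfl
      linarith [R0, e]
    · show u x 1 = _
      simp [Matrix.mulVec, dotProduct, Fin.sum_univ_three, Matrix.vecHead, Matrix.vecTail]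
      have e : comp u 1 x = u x 1 := rfl
      linarith [R1, e]
    · show u x 2 = _
      simp [Matrix.mulVec, dotProduct, Fin.sum_univ_three, Matrix.vecHead, Matrix.vecTail]
      have e : comp u 2 x = u x 2 := rfl
      linarith [R2, e]
  · rintro ⟨A, b, c, h⟩
    have hc0 : comp u 0 = fun x => A 0 0 * x 0 + A 0 1 * x 1 + A 0 2 * x 2 + b 0
        + c * (x 1 * x 2) := by
      funext x
      show u x 0 = _
      rw [h x]
      simp [Matrix.mulVec, dotProduct, Fin.sum_univ_three, Matrix.vecHead, Matrix.vecTail]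
      try ring
    have hc1 : comp u 1 = fun x => A 1 0 * x 0 + A 1 1 * x 1 + A 1 2 * x 2 + b 1
        + (-c) * (x 0 * x 2) := by
      funext x
      show u x 1 = _
      rw [h x]
      simp [Matrix.mulVec, dotProduct, Fin.sum_univ_three, Matrix.vecHead, Matrix.vecTail]
      try ring
    have hc2 : comp u 2 = fun x => A 2 0 * x 0 + A 2 1 * x 1 + A 2 2 * x 2 + b 2
        + 0 * (x 0 * x 2) := by
      funext x
      show u x 2 = _
      rw [h x]
      simp [Matrix.mulVec, dotProduct, Fin.sum_univ_three, Matrix.vecHead, Matrix.vecTail]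
      try ring
    have d00 : pd 0 (comp u 0) = fun _ => A 0 0 := by
      funext x; rw [hc0, pd_affq]; simp
    have d10 : pd 1 (comp u 0) = fun x => A 0 1 + c * x 2 := by
      funext x; rw [hc0, pd_affq]; simp
    have d20 : pd 2 (comp u 0) = fun x => A 0 2 + c * x 1 := by
      funext x; rw [hc0, pd_affq]; simp
    have d01 : pd 0 (comp u 1) = fun x => A 1 0 + (-c) * x 2 := by
      funext x; rw [hc1, pd_affq]; simp
    have d11 : pd 1 (comp u 1) = fun _ => A 1 1 := by
      funext x; rw [hc1, pd_affq]; simp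
    have d21 : pd 2 (comp u 1) = fun x => A 1 2 + (-c) * x 0 := by
      funext x; rw [hc1, pd_affq]; simp
    have d02 : pd 0 (comp u 2) = fun _ => A 2 0 := by
      funext x; rw [hc2, pd_affq]; simp
    have d12 : pd 1 (comp u 2) = fun _ => A 2 1 := by
      funext x; rw [hc2, pd_affq]; simp
    have d22 : pd 2 (comp u 2) = fun _ => A 2 2 := by
      funext x; rw [hc2, pd_affq]; simp
    refine ⟨?_, ?_, ?_, ?_, ?_, ?_, ?_, ?_, ?_, ?_, ?_, ?_, ?_, ?_, ?_, ?_, ?_⟩ <;> intro x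
    · show pd 0 (pd 0 (comp u 0)) x = 0
      rw [d00]; exact pd_const _ _ _
    · show pd 0 (pd 1 (comp u 0)) x = 0
      rw [d10, pd_lin1]; simp
    · show pd 0 (pd 2 (comp u 0)) x = 0
      rw [d20, pd_lin1]; simp
    · show pd 1 (pd 1 (comp u 0)) x = 0
      rw [d10, pd_lin1]; simp
    · show pd 2 (pd 2 (comp u 0)) x = 0
      rw [d20, pd_lin1]; simp
    · show pd 1 (pd 1 (comp u 1)) x = 0
      rw [d11]; exact pd_const _ _ _
    · show pd 0 (pd 1 (comp u 1)) x = 0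
      rw [d11]; exact pd_const _ _ _
    · show pd 1 (pd 2 (comp u 1)) x = 0
      rw [d21, pd_lin1]; simp
    · show pd 0 (pd 0 (comp u 1)) x = 0
      rw [d01, pd_lin1]; simp
    · show pd 2 (pd 2 (comp u 1)) x = 0
      rw [d21, pd_lin1]; simp
    · show pd 2 (pd 2 (comp u 2)) x = 0
      rw [d22]; exact pd_const _ _ _
    · show pd 0 (pd 2 (comp u 2)) x = 0
      rw [d22]; exact pd_const _ _ _
    · show pd 1 (pd 2 (comp u 2)) x = 0
      rw [d22]; exact pd_const _ _ _
    · show pd 0 (pd 0 (comp u 2)) x = 0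
      rw [d02]; exact pd_const _ _ _
    · show pd 1 (pd 1 (comp u 2)) x = 0
      rw [d12]; exact pd_const _ _ _
    · show pd 0 (pd 1 (comp u 2)) x = 0
      rw [d12]; exact pd_const _ _ _
    · show pd 1 (pd 2 (comp u 0)) x + pd 0 (pd 2 (comp u 1)) x = 0
      rw [d20, d21, pd_lin1, pd_lin1]; simp
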